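/- For n ≥ 4 and 1 ≤ i ≤ ⌊(n-1)/2⌋, in the symmetric inverse monoid on {1,...,n} one has (x_i ∘ g^i)² = e_2 ⋯ e_i ∘ e_{i+2} ⋯ e_n, the partial identity with domain {1, i+1}. -/

import Mathlib

/-- Powers in the symmetric inverse monoid (left-to-right composition). -/
def dPow (f : PartialEquiv ℕ ℕ) : ℕ → PartialEquiv ℕ ℕ
  | 0 => PartialEquiv.refl ℕ
  | k + 1 => (dPow f k).trans f

/-- The partial identity `e_j` on `{1,…,n} \ {j}`. -/
def dE (n j : ℕ) : PartialEquiv ℕ ℕ := PartialEquiv.ofSet (Set.Icc 1 n \ {j})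

/-- The `n`-cycle `g : i ↦ i+1 (mod n)` on `{1,…,n}`. -/
def dCyc (n : ℕ) : PartialEquiv ℕ ℕ where
  toFun k := if k = n then 1 else k + 1
  invFun k := if k = 1 then n else k - 1
  source := Set.Icc 1 n
  target := Set.Icc 1 n
  map_source' := by
    intro k hk
    simp only [Set.mem_Icc] at *
    split_ifs <;> omega
  map_target' := by
    intro k hk
    simp only [Set.mem_Icc] at *
    split_ifs <;> omega
  left_inv' := by
    intro k hk
    simp only [Set.mem_Icc] at hk
    (try dsimp only)
    split_ifs <;> omega
  right_inv' := by
    intro k hk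
    simp only [Set.mem_Icc] at hk
    (try dsimp only)
    split_ifs <;> omega

/-- The reversal `h : k ↦ n+1-k` on `{1,…,n}`. -/
def dRev (n : ℕ) : PartialEquiv ℕ ℕ where
  toFun k := n + 1 - k
  invFun k := n + 1 - k
  source := Set.Icc 1 n
  target := Set.Icc 1 n
  map_source' := by
    intro k hk; simp only [Set.mem_Icc] at *; omega
  map_target' := by
    intro k hk; simp only [Set.mem_Icc] at *; omega
  left_inv' := by
    intro k hk; simp only [Set.mem_Icc] at hk; (try dsimp only); omega
  right_inv' := by
    intro k hk; simp only [Set.mem_Icc] at hk; (try dsimp only); omega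

/-- The partial shift `x : j ↦ j+1` with domain `{1,…,n-1}`. -/
def dShift (n : ℕ) : PartialEquiv ℕ ℕ where
  toFun k := k + 1
  invFun k := k - 1
  source := Set.Icc 1 (n - 1)
  target := Set.Icc 2 n
  map_source' := by
    intro k hk; simp only [Set.mem_Icc] at *; omega
  map_target' := by
    intro k hk; simp only [Set.mem_Icc] at *; omega
  left_inv' := by
    intro k hk; simp only [Set.mem_Icc] at hk; (try dsimp only); omega
  right_inv' := by
    intro k hk; simp only [Set.mem_Icc] at hk; (try dsimp only); omega

/-- The rank-2 partial bijection `x_i` with domain `{1, 1+i}`, sending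
`1 ↦ 1` and `1+i ↦ n-i+1`. -/
def dXi (n i : ℕ) (h1 : 1 ≤ i) (h2 : i < n) : PartialEquiv ℕ ℕ where
  toFun k := if k = 1 then 1 else n - i + 1
  invFun k := if k = 1 then 1 else 1 + i
  source := {1, 1 + i}
  target := {1, n - i + 1}
  map_source' := by
    intro k _
    (try dsimp only)
    split_ifs <;> simp
  map_target' := by
    intro k _
    (try dsimp only)
    split_ifs <;> simp
  left_inv' := by
    intro k hk
    simp only [Set.mem_insert_iff, Set.mem_singleton_iff] at hk
    rcases hk with rfl | rfl <;> ((try dsimp only); split_ifs <;> omega)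
  right_inv' := by
    intro k hk
    simp only [Set.mem_insert_iff, Set.mem_singleton_iff] at hk
    rcases hk with rfl | rfl <;> ((try dsimp only); split_ifs <;> omega)

/-! `x_i g^i` has domain `{1, 1 + i}` and swaps its two points: `g^i` moves `1` to `1 + i`, and it
moves `x_i (1 + i) = n - i + 1` up to `n` in `i - 1` steps and then round to `1`. A partial bijection
that maps its domain to itself and is an involution there squares to the identity on its domain. -/

namespace PartialEquiv

variable {α β γ : Type*}

theorem trans_source_of_target_subset {e : PartialEquiv α β} {e' : PartialEquiv β γ}
    (h : e.target ⊆ e'.source) : (e.trans e').source = e.source := by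
  rw [trans_source, Set.inter_eq_left]
  exact fun x hx => h (e.map_source hx)

theorem trans_self_eqOnSource_ofSet (e : PartialEquiv α α)
    (hmaps : Set.MapsTo e e.source e.source) (hinv : ∀ x ∈ e.source, e (e x) = x) :
    e.trans e ≈ ofSet e.source := by
  have hsource : (e.trans e).source = e.source := by
    rw [trans_source, Set.inter_eq_left]
    exact hmaps
  refine ⟨by rw [hsource, ofSet_source], fun x hx => ?_⟩
  rw [hsource] at hx
  rw [trans_apply, hinv x hx, ofSet_coe, id]

end PartialEquiv

theorem coe_dPow (f : PartialEquiv ℕ ℕ) (k : ℕ) : ⇑(dPow f k) = (⇑f)^[k] := by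
  induction k with
  | zero => rfl
  | succ k ih => rw [dPow, PartialEquiv.coe_trans, ih, Function.iterate_succ']

theorem subset_dPow_source (f : PartialEquiv ℕ ℕ) {s : Set ℕ} (hs : s ⊆ f.source)
    (hmaps : Set.MapsTo f s s) (k : ℕ) : s ⊆ (dPow f k).source := by
  induction k with
  | zero => exact Set.subset_univ s
  | succ k ih =>
    intro x hx
    rw [dPow, PartialEquiv.trans_source, coe_dPow]
    exact ⟨ih hx, hs (hmaps.iterate k hx)⟩

theorem dCyc_apply_of_ne {n x : ℕ} (hx : x ≠ n) : dCyc n x = x + 1 := if_neg hx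

theorem dCyc_apply_self (n : ℕ) : dCyc n n = 1 := if_pos rfl

theorem dCyc_iterate_apply_of_add_le {n x k : ℕ} (h : x + k ≤ n) :
    (dCyc n)^[k] x = x + k := by
  induction k with
  | zero => rfl
  | succ k ih =>
    rw [Function.iterate_succ_apply', ih (by omega), dCyc_apply_of_ne (by omega)]
    rfl

theorem subset_dPow_dCyc_source (n k : ℕ) : Set.Icc 1 n ⊆ (dPow (dCyc n) k).source :=
  subset_dPow_source _ subset_rfl (dCyc n).mapsTo k

theorem dXi_apply_one {n i : ℕ} (h1 : 1 ≤ i) (h2 : i < n) : dXi n i h1 h2 1 = 1 := rfl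

theorem dXi_apply_one_add {n i : ℕ} (h1 : 1 ≤ i) (h2 : i < n) :
    dXi n i h1 h2 (1 + i) = n - i + 1 :=
  if_neg (show 1 + i ≠ 1 by omega)

/-- For `n ≥ 4` and `1 ≤ i ≤ ⌊(n-1)/2⌋`:
`(x_i g^i)² = e_2 ⋯ e_i e_{i+2} ⋯ e_n`, the partial identity with domain
`{1, i+1}` (left-to-right composition). -/
theorem stmt7 (n i : ℕ) (h1 : 1 ≤ i) (h2 : i ≤ (n - 1) / 2) :
    ((dXi n i h1 (by omega)).trans (dPow (dCyc n) i)).trans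
        ((dXi n i h1 (by omega)).trans (dPow (dCyc n) i))
      ≈ PartialEquiv.ofSet ({1, i + 1} : Set ℕ) := by
  have hin : i < n := by omega
  set e := (dXi n i h1 hin).trans (dPow (dCyc n) i)
  have he_one : e 1 = 1 + i := by
    rw [PartialEquiv.trans_apply, dXi_apply_one, coe_dPow,
      dCyc_iterate_apply_of_add_le (by omega)]
  have he_one_add : e (1 + i) = 1 := by
    obtain ⟨j, rfl⟩ : ∃ j, i = j + 1 := ⟨i - 1, by omega⟩
    rw [PartialEquiv.trans_apply, dXi_apply_one_add, coe_dPow, Function.iterate_succ_apply',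
      dCyc_iterate_apply_of_add_le (by omega), show n - (j + 1) + 1 + j = n by omega,
      dCyc_apply_self]
  have he_source : e.source = {1, 1 + i} := by
    refine PartialEquiv.trans_source_of_target_subset
      (subset_trans ?_ (subset_dPow_dCyc_source n i))
    simp only [dXi, Set.insert_subset_iff, Set.singleton_subset_iff, Set.mem_Icc]
    omega
  rw [add_comm i 1, ← he_source]
  refine e.trans_self_eqOnSource_ofSet ?_ ?_ <;>
    · rw [he_source]
      rintro x (rfl | rfl) <;> simp [he_one, he_one_add]
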